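/- arXiv:1909.02379 — 2 statements merged into one kernel-verified Lean document; each statement's English description precedes it below -/
import Mathlib

section
/- Let H be a real Hilbert space, let C ⊆ H be a nonempty closed convex subset, and let T : C → C be a mapping for which there exist k ∈ [0, ∞) and a ∈ [0, 1/2) such that ‖k(x−y) + Tx − Ty‖ ≤ a·(‖x − Tx‖ + ‖y − Ty‖) for all x, y ∈ C. Then T has a unique fixed point x* ∈ C, and with λ = 1/(k+1) the iterative algorithm xₙ₊₁ = (1−λ)xₙ + λT xₙ converges strongly to x* for any x₀ ∈ C. -/
/-!
With `λ = 1/(k+1)`, the averaged map `S x = (1-λ)x + λTx` satisfies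
`Sx - Sy = λ(k(x-y) + Tx - Ty)` and `x - Sx = λ(x - Tx)`, so the enriched Kannan condition for `T`
is exactly the ordinary Kannan condition for `S`, and `S` and `T` have the same fixed points.
For a Kannan map with constant `a < 1/2`, the condition at `(x, Sx)` gives
`d(Sx, S²x) ≤ a/(1-a) · d(x, Sx)` with `a/(1-a) < 1`, so Picard iterates are Cauchy; passing to the
limit in the condition at `(Sⁿx, q)` shows the limit `q` is fixed, and the condition at two fixed
points forces them to coincide.
-/

open Filter Topology Function Set

def KannanOnWith {α : Type*} [PseudoMetricSpace α] (a : ℝ) (S : α → α) (C : Set α) : Prop :=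
  ∀ x ∈ C, ∀ y ∈ C, dist (S x) (S y) ≤ a * (dist x (S x) + dist y (S y))

namespace KannanOnWith

variable {α : Type*} [MetricSpace α] {a : ℝ} {S : α → α} {C : Set α}

theorem dist_apply_apply_le (h : KannanOnWith a S C) (hS : MapsTo S C C) (ha : a < 1) {x : α}
    (hx : x ∈ C) : dist (S x) (S (S x)) ≤ a / (1 - a) * dist x (S x) := by
  have := h x hx (S x) (hS hx)
  rw [div_mul_eq_mul_div, le_div_iff₀ (by linarith)]
  linarith

theorem cauchySeq_iterate (h : KannanOnWith a S C) (hS : MapsTo S C C) (ha0 : 0 ≤ a)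
    (ha : a < 1 / 2) {x : α} (hx : x ∈ C) : CauchySeq fun n ↦ S^[n] x := by
  have ha1 : 0 < 1 - a := by linarith
  have hc : a / (1 - a) < 1 := by rw [div_lt_one ha1]; linarith
  refine cauchySeq_of_le_geometric _ (dist x (S x)) hc fun n ↦ ?_
  rw [mul_comm]
  refine le_geom (u := fun n ↦ dist (S^[n] x) (S^[n + 1] x)) (by positivity) n fun m _ ↦ ?_
  simpa only [iterate_succ_apply'] using h.dist_apply_apply_le hS (by linarith) (hS.iterate m hx)

theorem isFixedPt_of_tendsto_iterate (h : KannanOnWith a S C) (hS : MapsTo S C C) (ha : a < 1)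
    {x q : α} (hx : x ∈ C) (hq : q ∈ C) (hlim : Tendsto (fun n ↦ S^[n] x) atTop (𝓝 q)) :
    IsFixedPt S q := by
  have hlim' : Tendsto (fun n ↦ S^[n + 1] x) atTop (𝓝 q) :=
    hlim.comp (tendsto_add_atTop_nat 1)
  have hle : dist q (S q) ≤ a * (dist q q + dist q (S q)) :=
    le_of_tendsto_of_tendsto' (hlim'.dist tendsto_const_nhds)
      (((hlim.dist hlim').add tendsto_const_nhds).const_mul a) fun n ↦ by
        simpa only [iterate_succ_apply'] using h _ (hS.iterate n hx) q hq
  rw [dist_self, zero_add] at hle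
  exact (dist_le_zero.1 (by nlinarith [dist_nonneg (x := q) (y := S q)])).symm

theorem eq_of_isFixedPt (h : KannanOnWith a S C) {p q : α} (hp : p ∈ C) (hq : q ∈ C)
    (hpS : IsFixedPt S p) (hqS : IsFixedPt S q) : p = q :=
  dist_le_zero.1 <| by simpa [hpS.eq, hqS.eq] using h p hp q hq

theorem exists_isFixedPt_tendsto_iterate [CompleteSpace α] (h : KannanOnWith a S C)
    (hC : IsClosed C) (hS : MapsTo S C C) (ha0 : 0 ≤ a) (ha : a < 1 / 2) {x : α} (hx : x ∈ C) :
    ∃ q ∈ C, IsFixedPt S q ∧ Tendsto (fun n ↦ S^[n] x) atTop (𝓝 q) := by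
  obtain ⟨q, hlim⟩ := cauchySeq_tendsto_of_complete (h.cauchySeq_iterate hS ha0 ha hx)
  have hq : q ∈ C := hC.mem_of_tendsto hlim (.of_forall fun n ↦ hS.iterate n hx)
  exact ⟨q, hq, h.isFixedPt_of_tendsto_iterate hS (by linarith) hx hq hlim, hlim⟩

end KannanOnWith

section Enriched

variable {E : Type*} [NormedAddCommGroup E] [NormedSpace ℝ E] {k a l : ℝ} {T : E → E}
  {C : Set E}

def EnrichedKannanOnWith (k a : ℝ) (T : E → E) (C : Set E) : Prop :=
  ∀ x ∈ C, ∀ y ∈ C, ‖k • (x - y) + (T x - T y)‖ ≤ a * (‖x - T x‖ + ‖y - T y‖)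

def averagedMap (l : ℝ) (T : E → E) (x : E) : E :=
  (1 - l) • x + l • T x

theorem sub_averagedMap (l : ℝ) (T : E → E) (x : E) : x - averagedMap l T x = l • (x - T x) := by
  unfold averagedMap
  module

theorem averagedMap_sub_averagedMap (hk : k + 1 ≠ 0) (T : E → E) (x y : E) :
    averagedMap (1 / (k + 1)) T x - averagedMap (1 / (k + 1)) T y =
      (1 / (k + 1)) • (k • (x - y) + (T x - T y)) := by
  have hl : 1 - 1 / (k + 1) = k * (1 / (k + 1)) := by field_simp; ring
  unfold averagedMap
  rw [hl]
  module

theorem isFixedPt_averagedMap_iff (hl : l ≠ 0) {x : E} :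
    IsFixedPt (averagedMap l T) x ↔ IsFixedPt T x := by
  rw [IsFixedPt, IsFixedPt, eq_comm, ← sub_eq_zero, sub_averagedMap, smul_eq_zero_iff_right hl,
    sub_eq_zero, eq_comm]

theorem mapsTo_averagedMap (hC : Convex ℝ C) (hT : MapsTo T C C) (hl0 : 0 ≤ l) (hl1 : l ≤ 1) :
    MapsTo (averagedMap l T) C C :=
  fun _ hx ↦ hC hx (hT hx) (by linarith) hl0 (by ring)

theorem EnrichedKannanOnWith.kannanOnWith_averagedMap (h : EnrichedKannanOnWith k a T C)
    (hk : 0 ≤ k) : KannanOnWith a (averagedMap (1 / (k + 1)) T) C := by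
  intro x hx y hy
  have hl : 0 ≤ 1 / (k + 1) := by positivity
  rw [dist_eq_norm, dist_eq_norm, dist_eq_norm, averagedMap_sub_averagedMap (by positivity),
    sub_averagedMap, sub_averagedMap, norm_smul, norm_smul, norm_smul, Real.norm_of_nonneg hl,
    ← mul_add, mul_left_comm]
  exact mul_le_mul_of_nonneg_left (h x hx y hy) hl

end Enriched

/-- Krasnoselskij projection-type algorithm for `(k, a)`-enriched Kannan
mappings on a nonempty closed convex subset `C` of a real Hilbert space:
`T` has a unique fixed point `x* ∈ C` and, with `λ = 1/(k+1)`, the iteration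
`xₙ₊₁ = (1−λ)xₙ + λ T xₙ` converges strongly to `x*` for any `x₀ ∈ C`. -/
theorem enrichedKannan_krasnoselskij_hilbert
    {H : Type*} [NormedAddCommGroup H] [InnerProductSpace ℝ H] [CompleteSpace H]
    (C : Set H) (hC : IsClosed C) (hCc : Convex ℝ C) (hCne : C.Nonempty)
    (T : H → H) (hTC : ∀ x ∈ C, T x ∈ C)
    (k a : ℝ) (hk : 0 ≤ k) (ha0 : 0 ≤ a) (ha : a < 1 / 2)
    (hT : ∀ x ∈ C, ∀ y ∈ C,
      ‖k • (x - y) + (T x - T y)‖ ≤ a * (‖x - T x‖ + ‖y - T y‖)) :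
    ∃ p : H, p ∈ C ∧ T p = p ∧ (∀ q ∈ C, T q = q → q = p) ∧
      ∀ x : ℕ → H, x 0 ∈ C →
        (∀ n : ℕ, x (n + 1) = (1 - 1 / (k + 1)) • x n + (1 / (k + 1)) • T (x n)) →
        Filter.Tendsto x Filter.atTop (nhds p) := by
  set S := averagedMap (1 / (k + 1)) T
  have hS : MapsTo S C C :=
    mapsTo_averagedMap hCc hTC (by positivity) (div_le_one_of_le₀ (by linarith) (by positivity))
  have hKS : KannanOnWith a S C := EnrichedKannanOnWith.kannanOnWith_averagedMap hT hk
  have hfix (q : H) : IsFixedPt S q ↔ T q = q := isFixedPt_averagedMap_iff (by positivity)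
  obtain ⟨p, hpC, hpS, -⟩ := hKS.exists_isFixedPt_tendsto_iterate hC hS ha0 ha hCne.some_mem
  refine ⟨p, hpC, (hfix p).1 hpS,
    fun q hq hTq ↦ hKS.eq_of_isFixedPt hq hpC ((hfix q).2 hTq) hpS, fun x hx0 hx ↦ ?_⟩
  have hx_iterate : (fun n ↦ S^[n] (x 0)) = x := funext fun n ↦ by
    induction n with
    | zero => rfl
    | succ n ih => rw [iterate_succ_apply', ih, hx]; rfl
  obtain ⟨q, hqC, hqS, hlim⟩ := hKS.exists_isFixedPt_tendsto_iterate hC hS ha0 ha hx0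
  rwa [hx_iterate, hKS.eq_of_isFixedPt hqC hpC hqS hpS] at hlim
end

section
/- Let H be a real Hilbert space, let C ⊆ H be a nonempty closed convex subset, and let T : C → C be a mapping for which there exist k ∈ [0, ∞) and h ∈ [0, 1) such that ‖k(x−y) + Tx − Ty‖ ≤ h·max{‖x − Tx‖, ‖y − Ty‖} for all x, y ∈ C. Then T has a unique fixed point x* ∈ C, and with λ = 1/(k+1) the iterative algorithm xₙ₊₁ = (1−λ)xₙ + λT xₙ converges strongly to x* for any x₀ ∈ C. -/
/-!
With `λ = 1/(k+1)` the averaged map `S = (1-λ) id + λ T` satisfies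
`S x - S y = λ (k(x-y) + Tx - Ty)` and `x - S x = λ (x - T x)`, so `S` is a plain Bianchini map
`‖Sx - Sy‖ ≤ h max{‖x - Sx‖, ‖y - Sy‖}` with the same fixed points as `T`. Along the Picard
iterates of a Bianchini map the displacements decrease geometrically with ratio `h`, so the
iterates are Cauchy, and passing to the limit in the Bianchini inequality shows that the limit
is a fixed point; two fixed points are at distance `≤ h · 0`.
-/

open Filter Function Set Topology

section Metric

variable {X : Type*} [MetricSpace X] {C : Set X} {S : X → X} {h : ℝ}

def IsBianchini (C : Set X) (S : X → X) (h : ℝ) : Prop :=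
  ∀ x ∈ C, ∀ y ∈ C, dist (S x) (S y) ≤ h * max (dist x (S x)) (dist y (S y))

namespace IsBianchini

theorem eq_of_isFixedPt (hS : IsBianchini C S h) {p q : X} (hp : p ∈ C) (hq : q ∈ C)
    (hSp : IsFixedPt S p) (hSq : IsFixedPt S q) : p = q := by
  have := hS p hp q hq
  rw [hSp.eq, hSq.eq, dist_self, dist_self, max_self, mul_zero] at this
  exact dist_le_zero.mp this

theorem dist_map_map_le (hS : IsBianchini C S h) (hh0 : 0 ≤ h) (hh : h < 1) {x : X}
    (hx : x ∈ C) (hSx : S x ∈ C) : dist (S x) (S (S x)) ≤ h * dist x (S x) := by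
  have key := hS x hx (S x) hSx
  rcases le_total (dist x (S x)) (dist (S x) (S (S x))) with hle | hle
  · -- `d ≤ h d` with `h < 1` forces `d = 0`
    rw [max_eq_right hle] at key
    have hzero : dist (S x) (S (S x)) = 0 := by nlinarith [dist_nonneg (x := S x) (y := S (S x))]
    rw [hzero]
    exact mul_nonneg hh0 dist_nonneg
  · rwa [max_eq_left hle] at key

variable {x : ℕ → X}

theorem dist_succ_le_geometric (hS : IsBianchini C S h) (hh0 : 0 ≤ h) (hh : h < 1)
    (hxC : ∀ n, x n ∈ C) (hx : ∀ n, x (n + 1) = S (x n)) (n : ℕ) :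
    dist (x n) (x (n + 1)) ≤ dist (x 0) (x 1) * h ^ n := by
  induction n with
  | zero => simp
  | succ n ih =>
    calc dist (x (n + 1)) (x (n + 2))
        ≤ h * dist (x n) (x (n + 1)) := by
          rw [hx (n + 1), hx n]
          exact hS.dist_map_map_le hh0 hh (hxC n) (hx n ▸ hxC (n + 1))
      _ ≤ h * (dist (x 0) (x 1) * h ^ n) := mul_le_mul_of_nonneg_left ih hh0
      _ = dist (x 0) (x 1) * h ^ (n + 1) := by ring

theorem isFixedPt_of_tendsto (hS : IsBianchini C S h) (hh : h < 1) (hxC : ∀ n, x n ∈ C)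
    (hx : ∀ n, x (n + 1) = S (x n)) {q : X} (hq : q ∈ C) (hlim : Tendsto x atTop (𝓝 q)) :
    IsFixedPt S q := by
  have hshift : Tendsto (fun n ↦ x (n + 1)) atTop (𝓝 q) := hlim.comp (tendsto_add_atTop_nat 1)
  have hstep : Tendsto (fun n ↦ dist (x n) (x (n + 1))) atTop (𝓝 0) := by
    simpa using hlim.dist hshift
  have hle : dist q (S q) ≤ h * max 0 (dist q (S q)) :=
    le_of_tendsto_of_tendsto' (hshift.dist tendsto_const_nhds)
      ((hstep.max tendsto_const_nhds).const_mul h)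
      (fun n ↦ hx n ▸ hS (x n) (hxC n) q hq)
  rw [max_eq_right dist_nonneg] at hle
  have hzero : dist q (S q) = 0 := by nlinarith [dist_nonneg (x := q) (y := S q)]
  exact (dist_eq_zero.mp hzero).symm

theorem exists_isFixedPt_tendsto [CompleteSpace X] (hS : IsBianchini C S h) (hC : IsClosed C)
    (hSC : MapsTo S C C) (hh0 : 0 ≤ h) (hh : h < 1) (hx0 : x 0 ∈ C)
    (hx : ∀ n, x (n + 1) = S (x n)) : ∃ q ∈ C, IsFixedPt S q ∧ Tendsto x atTop (𝓝 q) := by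
  have hxC : ∀ n, x n ∈ C := by
    intro n
    induction n with
    | zero => exact hx0
    | succ n ih => exact hx n ▸ hSC ih
  obtain ⟨q, hlim⟩ := cauchySeq_tendsto_of_complete <|
    cauchySeq_of_le_geometric h _ hh (hS.dist_succ_le_geometric hh0 hh hxC hx)
  have hq : q ∈ C := hC.mem_of_tendsto hlim (Eventually.of_forall hxC)
  exact ⟨q, hq, hS.isFixedPt_of_tendsto hh hxC hx hq hlim, hlim⟩

theorem exists_unique_isFixedPt_tendsto [CompleteSpace X] (hS : IsBianchini C S h)
    (hC : IsClosed C) (hCne : C.Nonempty) (hSC : MapsTo S C C) (hh0 : 0 ≤ h) (hh : h < 1) :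
    ∃ p ∈ C, IsFixedPt S p ∧ (∀ q ∈ C, IsFixedPt S q → q = p) ∧
      ∀ x : ℕ → X, x 0 ∈ C → (∀ n, x (n + 1) = S (x n)) → Tendsto x atTop (𝓝 p) := by
  obtain ⟨x₀, hx₀⟩ := hCne
  obtain ⟨p, hp, hSp, -⟩ := hS.exists_isFixedPt_tendsto (x := fun n ↦ S^[n] x₀) hC hSC hh0 hh
    hx₀ (fun n ↦ iterate_succ_apply' S n x₀)
  refine ⟨p, hp, hSp, fun q hq hSq ↦ hS.eq_of_isFixedPt hq hp hSq hSp, fun x hx0 hx ↦ ?_⟩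
  obtain ⟨q, hq, hSq, hlim⟩ := hS.exists_isFixedPt_tendsto hC hSC hh0 hh hx0 hx
  rwa [hS.eq_of_isFixedPt hq hp hSq hSp] at hlim

end IsBianchini

end Metric

section Normed

variable {E : Type*} [NormedAddCommGroup E] [NormedSpace ℝ E] {C : Set E} {T : E → E} {k h l : ℝ}

def IsEnrichedBianchini (C : Set E) (T : E → E) (k h : ℝ) : Prop :=
  ∀ x ∈ C, ∀ y ∈ C, ‖k • (x - y) + (T x - T y)‖ ≤ h * max ‖x - T x‖ ‖y - T y‖

def krasnoselskijMap (T : E → E) (l : ℝ) (x : E) : E :=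
  (1 - l) • x + l • T x

theorem sub_krasnoselskijMap (T : E → E) (l : ℝ) (x : E) :
    x - krasnoselskijMap T l x = l • (x - T x) := by
  unfold krasnoselskijMap
  module

theorem krasnoselskijMap_sub_krasnoselskijMap (hk : k + 1 ≠ 0) (x y : E) :
    krasnoselskijMap T (1 / (k + 1)) x - krasnoselskijMap T (1 / (k + 1)) y =
      (1 / (k + 1)) • (k • (x - y) + (T x - T y)) := by
  have hlk : 1 - 1 / (k + 1) = 1 / (k + 1) * k := by field_simp; ring
  unfold krasnoselskijMap
  rw [hlk]
  module

theorem isFixedPt_krasnoselskijMap_iff (hl : l ≠ 0) {x : E} :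
    IsFixedPt (krasnoselskijMap T l) x ↔ IsFixedPt T x := by
  rw [IsFixedPt, IsFixedPt, eq_comm, ← sub_eq_zero, sub_krasnoselskijMap, smul_eq_zero,
    or_iff_right hl, sub_eq_zero, eq_comm]

theorem mapsTo_krasnoselskijMap (hC : Convex ℝ C) (hT : MapsTo T C C) (hl0 : 0 ≤ l)
    (hl1 : l ≤ 1) : MapsTo (krasnoselskijMap T l) C C :=
  fun _ hx ↦ hC hx (hT hx) (sub_nonneg.mpr hl1) hl0 (sub_add_cancel 1 l)

theorem IsEnrichedBianchini.isBianchini_krasnoselskijMap (hT : IsEnrichedBianchini C T k h)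
    (hk : k + 1 ≠ 0) : IsBianchini C (krasnoselskijMap T (1 / (k + 1))) h := by
  intro x hx y hy
  simp only [dist_eq_norm, krasnoselskijMap_sub_krasnoselskijMap hk, sub_krasnoselskijMap,
    norm_smul, ← mul_max_of_nonneg _ _ (norm_nonneg (1 / (k + 1)))]
  calc ‖1 / (k + 1)‖ * ‖k • (x - y) + (T x - T y)‖
      ≤ ‖1 / (k + 1)‖ * (h * max ‖x - T x‖ ‖y - T y‖) := by gcongr; exact hT x hx y hy
    _ = h * (‖1 / (k + 1)‖ * max ‖x - T x‖ ‖y - T y‖) := by ring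

end Normed

/-- Krasnoselskij projection-type algorithm for `(k, h)`-enriched Bianchini
mappings on a nonempty closed convex subset `C` of a real Hilbert space:
`T` has a unique fixed point `x* ∈ C` and, with `λ = 1/(k+1)`, the iteration
`xₙ₊₁ = (1−λ)xₙ + λ T xₙ` converges strongly to `x*` for any `x₀ ∈ C`. -/
theorem enrichedBianchini_krasnoselskij_hilbert
    {H : Type*} [NormedAddCommGroup H] [InnerProductSpace ℝ H] [CompleteSpace H]
    (C : Set H) (hC : IsClosed C) (hCc : Convex ℝ C) (hCne : C.Nonempty)
    (T : H → H) (hTC : ∀ x ∈ C, T x ∈ C)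
    (k h : ℝ) (hk : 0 ≤ k) (hh0 : 0 ≤ h) (hh : h < 1)
    (hT : ∀ x ∈ C, ∀ y ∈ C,
      ‖k • (x - y) + (T x - T y)‖ ≤ h * max ‖x - T x‖ ‖y - T y‖) :
    ∃ p : H, p ∈ C ∧ T p = p ∧ (∀ q ∈ C, T q = q → q = p) ∧
      ∀ x : ℕ → H, x 0 ∈ C →
        (∀ n : ℕ, x (n + 1) = (1 - 1 / (k + 1)) • x n + (1 / (k + 1)) • T (x n)) →
        Filter.Tendsto x Filter.atTop (nhds p) := by
  have hl0 : 0 < 1 / (k + 1) := by positivity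
  have hl1 : 1 / (k + 1) ≤ 1 := by rw [div_le_one (by positivity)]; linarith
  have hS : IsBianchini C (krasnoselskijMap T (1 / (k + 1))) h :=
    IsEnrichedBianchini.isBianchini_krasnoselskijMap hT (by positivity)
  obtain ⟨p, hp, hSp, huniq, hlim⟩ :=
    hS.exists_unique_isFixedPt_tendsto hC hCne (mapsTo_krasnoselskijMap hCc hTC hl0.le hl1) hh0 hh
  exact ⟨p, hp, (isFixedPt_krasnoselskijMap_iff hl0.ne').mp hSp,
    fun q hq hTq ↦ huniq q hq ((isFixedPt_krasnoselskijMap_iff hl0.ne').mpr hTq), hlim⟩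
end
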